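/- arXiv:2510.08434 — 2 statements merged into one kernel-verified Lean document; each statement's English description precedes it below -/
import Mathlib

section
/- Sequential gentle measurement: let |ψ⟩ be a unit vector in a finite-dimensional Hilbert space, P₁,…,P_k orthogonal projections, and U₁,…,U_k unitaries. Then ‖U_k⋯U₁|ψ⟩ − P_k U_k ⋯ P₁ U₁|ψ⟩‖₂ ≤ k·√(1 − ‖P_k U_k ⋯ P₁ U₁|ψ⟩‖₂²). -/
open Matrix

/-- A matrix acting on Euclidean space. -/
noncomputable def act {N : ℕ} (M : Matrix (Fin N) (Fin N) ℂ)
    (x : EuclideanSpace ℂ (Fin N)) : EuclideanSpace ℂ (Fin N) :=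
  WithLp.toLp 2 (M.mulVec x)

/-- The state `U_j ⋯ U_1 |ψ⟩` after `j` unitaries. -/
noncomputable def chainU {N : ℕ} (U : ℕ → Matrix (Fin N) (Fin N) ℂ)
    (ψ : EuclideanSpace ℂ (Fin N)) : ℕ → EuclideanSpace ℂ (Fin N)
  | 0 => ψ
  | j + 1 => act (U (j + 1)) (chainU U ψ j)

/-- The state `P_j U_j ⋯ P_1 U_1 |ψ⟩` after `j` projected steps. -/
noncomputable def chainPU {N : ℕ} (P U : ℕ → Matrix (Fin N) (Fin N) ℂ)
    (ψ : EuclideanSpace ℂ (Fin N)) : ℕ → EuclideanSpace ℂ (Fin N)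
  | 0 => ψ
  | j + 1 => act (P (j + 1)) (act (U (j + 1)) (chainPU P U ψ j))

/-! Write `φ_j = chainPU P U ψ j`. The error after step `k + 1` is the error after step `k`,
transported by the isometry `U_{k+1}`, plus the disturbance `y - P_{k+1} y` of the projection on
`y = U_{k+1} φ_k`. By Pythagoras the disturbance has norm
`√(‖y‖² - ‖P_{k+1} y‖²) ≤ √(1 - ‖φ_{k+1}‖²)`. The norms `‖φ_j‖` only decrease, so each of the
`k` disturbances is bounded by the last one. -/

open scoped InnerProductSpace

section StarProjection

variable {𝕜 E : Type*} [RCLike 𝕜] [NormedAddCommGroup E] [InnerProductSpace 𝕜 E]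
  [CompleteSpace E] {p : E →L[𝕜] E}

theorem IsStarProjection.inner_sub_apply_apply_eq_zero (hp : IsStarProjection p) (x : E) :
    ⟪x - p x, p x⟫_𝕜 = 0 := by
  rw [inner_sub_left, ← ContinuousLinearMap.adjoint_inner_right,
    ← ContinuousLinearMap.star_eq_adjoint, hp.isSelfAdjoint.star_eq, ← mul_apply_eq_comp,
    hp.isIdempotentElem.eq, sub_self]

theorem IsStarProjection.norm_sub_apply_sq (hp : IsStarProjection p) (x : E) :
    ‖x - p x‖ ^ 2 = ‖x‖ ^ 2 - ‖p x‖ ^ 2 := by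
  have h := norm_add_sq_eq_norm_sq_add_norm_sq_of_inner_eq_zero _ _ (hp.inner_sub_apply_apply_eq_zero x)
  rw [sub_add_cancel] at h
  linarith

theorem IsStarProjection.norm_apply_le (hp : IsStarProjection p) (x : E) : ‖p x‖ ≤ ‖x‖ := by
  simpa using (ContinuousLinearMap.le_of_opNorm_le p hp.norm_le x)

theorem IsStarProjection.norm_sub_apply_le_sqrt (hp : IsStarProjection p) {x : E} (hx : ‖x‖ ≤ 1) :
    ‖x - p x‖ ≤ √(1 - ‖p x‖ ^ 2) := by
  refine Real.le_sqrt_of_sq_le ?_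
  rw [hp.norm_sub_apply_sq]
  nlinarith [norm_nonneg x]

end StarProjection

section Matrix

variable {N : ℕ}

theorem act_eq_toEuclideanCLM (M : Matrix (Fin N) (Fin N) ℂ) (x : EuclideanSpace ℂ (Fin N)) :
    act M x = Matrix.toEuclideanCLM (n := Fin N) (𝕜 := ℂ) M x := rfl

theorem norm_act_of_mem_unitaryGroup {U : Matrix (Fin N) (Fin N) ℂ}
    (hU : U ∈ Matrix.unitaryGroup (Fin N) ℂ) (x : EuclideanSpace ℂ (Fin N)) :
    ‖act U x‖ = ‖x‖ :=
  ContinuousLinearMap.norm_map_of_mem_unitary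
    (Unitary.map_mem (Matrix.toEuclideanCLM (n := Fin N) (𝕜 := ℂ)) hU) x

theorem norm_act_le_of_isStarProjection {P : Matrix (Fin N) (Fin N) ℂ} (hP : IsStarProjection P)
    (x : EuclideanSpace ℂ (Fin N)) : ‖act P x‖ ≤ ‖x‖ := by
  rw [act_eq_toEuclideanCLM]
  exact (hP.map Matrix.toEuclideanCLM).norm_apply_le x

theorem norm_sub_act_le_sqrt_of_isStarProjection {P : Matrix (Fin N) (Fin N) ℂ}
    (hP : IsStarProjection P) {x : EuclideanSpace ℂ (Fin N)} (hx : ‖x‖ ≤ 1) :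
    ‖x - act P x‖ ≤ √(1 - ‖act P x‖ ^ 2) := by
  rw [act_eq_toEuclideanCLM]
  exact (hP.map Matrix.toEuclideanCLM).norm_sub_apply_le_sqrt hx

end Matrix

section Chain

variable {N : ℕ} {P U : ℕ → Matrix (Fin N) (Fin N) ℂ} {ψ : EuclideanSpace ℂ (Fin N)}

theorem antitone_norm_chainPU (hP : ∀ i, IsStarProjection (P i))
    (hU : ∀ i, U i ∈ Matrix.unitaryGroup (Fin N) ℂ) :
    Antitone fun j ↦ ‖chainPU P U ψ j‖ :=
  antitone_nat_of_succ_le fun j ↦ by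
    simpa only [chainPU, norm_act_of_mem_unitaryGroup (hU (j + 1))] using
      norm_act_le_of_isStarProjection (hP (j + 1)) (act (U (j + 1)) (chainPU P U ψ j))

theorem norm_chainU_sub_chainPU_succ_le (hψ : ‖ψ‖ ≤ 1) (hP : ∀ i, IsStarProjection (P i))
    (hU : ∀ i, U i ∈ Matrix.unitaryGroup (Fin N) ℂ) (k : ℕ) :
    ‖chainU U ψ (k + 1) - chainPU P U ψ (k + 1)‖ ≤
      ‖chainU U ψ k - chainPU P U ψ k‖ + √(1 - ‖chainPU P U ψ (k + 1)‖ ^ 2) := by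
  set y := act (U (k + 1)) (chainPU P U ψ k)
  have hy : ‖y‖ ≤ 1 := by
    rw [norm_act_of_mem_unitaryGroup (hU (k + 1))]
    exact (antitone_norm_chainPU hP hU (Nat.zero_le k)).trans hψ
  have hsplit : chainU U ψ (k + 1) - act (P (k + 1)) y =
      act (U (k + 1)) (chainU U ψ k - chainPU P U ψ k) + (y - act (P (k + 1)) y) := by
    simp only [chainU, act_eq_toEuclideanCLM, map_sub, y]
    abel
  change ‖chainU U ψ (k + 1) - act (P (k + 1)) y‖ ≤ _ + √(1 - ‖act (P (k + 1)) y‖ ^ 2)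
  calc ‖chainU U ψ (k + 1) - act (P (k + 1)) y‖
      ≤ ‖act (U (k + 1)) (chainU U ψ k - chainPU P U ψ k)‖ + ‖y - act (P (k + 1)) y‖ :=
        hsplit ▸ norm_add_le _ _
    _ ≤ ‖chainU U ψ k - chainPU P U ψ k‖ + √(1 - ‖act (P (k + 1)) y‖ ^ 2) := by
        rw [norm_act_of_mem_unitaryGroup (hU (k + 1))]
        gcongr
        exact norm_sub_act_le_sqrt_of_isStarProjection (hP (k + 1)) hy

end Chain

/-- Sequential gentle measurement: for a unit vector `ψ`, orthogonal projections
`P_1, …, P_k` and unitaries `U_1, …, U_k`,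
`‖U_k⋯U_1 ψ − P_k U_k ⋯ P_1 U_1 ψ‖ ≤ k √(1 − ‖P_k U_k ⋯ P_1 U_1 ψ‖²)`. -/
theorem sequential_gentle_measurement {N : ℕ} (k : ℕ)
    (ψ : EuclideanSpace ℂ (Fin N)) (hψ : ‖ψ‖ = 1)
    (P U : ℕ → Matrix (Fin N) (Fin N) ℂ)
    (hP : ∀ i, (P i)ᴴ = P i ∧ P i * P i = P i)
    (hU : ∀ i, U i ∈ Matrix.unitaryGroup (Fin N) ℂ) :
    ‖chainU U ψ k - chainPU P U ψ k‖ ≤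
      k * Real.sqrt (1 - ‖chainPU P U ψ k‖ ^ 2) := by
  have hP' (i : ℕ) : IsStarProjection (P i) := ⟨(hP i).2, (hP i).1⟩
  induction k with
  | zero => simp [chainU, chainPU]
  | succ k ih =>
    have hsqrt_mono : √(1 - ‖chainPU P U ψ k‖ ^ 2) ≤ √(1 - ‖chainPU P U ψ (k + 1)‖ ^ 2) := by
      gcongr
      exact antitone_norm_chainPU hP' hU (Nat.le_succ k)
    calc ‖chainU U ψ (k + 1) - chainPU P U ψ (k + 1)‖
        ≤ ‖chainU U ψ k - chainPU P U ψ k‖ + √(1 - ‖chainPU P U ψ (k + 1)‖ ^ 2) :=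
          norm_chainU_sub_chainPU_succ_le hψ.le hP' hU k
      _ ≤ k * √(1 - ‖chainPU P U ψ (k + 1)‖ ^ 2) + √(1 - ‖chainPU P U ψ (k + 1)‖ ^ 2) := by
          gcongr
          exact ih.trans (mul_le_mul_of_nonneg_left hsqrt_mono k.cast_nonneg)
      _ = (k + 1 : ℕ) * √(1 - ‖chainPU P U ψ (k + 1)‖ ^ 2) := by push_cast; ring
end

section
/- Gentle measurement lemma: for any density operator ρ and orthogonal projection Π on a finite-dimensional Hilbert space, ‖ΠρΠ − ρ‖₁ ≤ 2√(1 − Tr(Πρ)). -/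
/-!
With `Q = 1 - Π`, the Hermitian matrix `ΠρΠ - ρ` equals `-QρΠ - ρQ`. Its trace norm is
`Re tr (U (ΠρΠ - ρ))` for the unitary `U = sgn (ΠρΠ - ρ)`, and Cauchy–Schwarz for the
semi-inner product `⟪A, B⟫ = tr (B ρ Aᴴ)` bounds the two terms by
`√tr(QρQ) √tr(ΠρΠ)` and `√tr(QρQ) √tr ρ`. Finally `tr (QρQ) = 1 - tr (Πρ)` and `tr (ΠρΠ) ≤ 1`.
-/

open Matrix
open scoped ComplexOrder

/-- The trace norm (sum of singular values) of a complex square matrix. -/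
noncomputable def traceNorm {ι : Type*} [Fintype ι] [DecidableEq ι]
    (A : Matrix ι ι ℂ) : ℝ :=
  (((Matrix.posSemidef_conjTranspose_mul_self A).1.eigenvectorUnitary : Matrix ι ι ℂ) *
      diagonal (((↑) : ℝ → ℂ) ∘ (Real.sqrt ·) ∘ (Matrix.posSemidef_conjTranspose_mul_self A).1.eigenvalues) *
      (star (Matrix.posSemidef_conjTranspose_mul_self A).1.eigenvectorUnitary : Matrix ι ι ℂ)).trace.re

namespace Matrix

open scoped MatrixOrder

variable {n : Type*} [Fintype n]

theorem trace_mul_mul_self_of_isIdempotentElem {R : Type*} [CommSemiring R] {P : Matrix n n R}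
    (hP : IsIdempotentElem P) (A : Matrix n n R) : (P * A * P).trace = (P * A).trace := by
  rw [trace_mul_cycle, hP.eq]

theorem trace_mul_mul_star_of_mem_unitary {R : Type*} [CommRing R] [StarRing R] [DecidableEq n]
    {U : Matrix n n R} (hU : U ∈ unitary (Matrix n n R)) (A : Matrix n n R) :
    (U * A * star U).trace = A.trace := by
  rw [trace_mul_cycle, Unitary.star_mul_self_of_mem hU, one_mul]

theorem PosSemidef.norm_trace_mul_mul_conjTranspose_le {𝕜 : Type*} [RCLike 𝕜] {ρ : Matrix n n 𝕜}
    (hρ : ρ.PosSemidef) (A B : Matrix n n 𝕜) :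
    ‖(B * ρ * Aᴴ).trace‖ ≤
      √(RCLike.re (A * ρ * Aᴴ).trace) * √(RCLike.re (B * ρ * Bᴴ).trace) := by
  let := ρ.toMatrixSeminormedAddCommGroup hρ
  let := ρ.toMatrixInnerProductSpace hρ
  have := norm_inner_le_norm (𝕜 := 𝕜) A B
  rwa [norm_eq_sqrt_re_inner (𝕜 := 𝕜) A, norm_eq_sqrt_re_inner (𝕜 := 𝕜) B] at this

variable [DecidableEq n]

theorem traceNorm_eq_re_trace_cfcAbs (A : Matrix n n ℂ) : traceNorm A = (CFC.abs A).trace.re := by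
  have h := (posSemidef_conjTranspose_mul_self A).1.cfc_eq Real.sqrt
  rw [IsHermitian.cfc, Unitary.conjStarAlgAut_apply] at h
  rw [CFC.abs, star_eq_conjTranspose,
    CFC.sqrt_eq_real_sqrt _ (posSemidef_conjTranspose_mul_self A).nonneg, cfcₙ_eq_cfc, h]
  rfl

/-- The witness is `U = sgn M` with `sgn 0 = 1`, so that `U² = 1` and `U M = |M|`. -/
theorem IsHermitian.exists_unitary_traceNorm_eq {M : Matrix n n ℂ} (hM : M.IsHermitian) :
    ∃ U ∈ unitary (Matrix n n ℂ), traceNorm M = (U * M).trace.re := by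
  let σ : ℝ → ℝ := fun x => if x < 0 then -1 else 1
  -- discontinuous, but the spectrum is finite; `cfc` picks this up from the context
  have hσ : ContinuousOn σ (spectrum ℝ M) := M.finite_real_spectrum.continuousOn σ
  refine ⟨cfc σ M, ?_, ?_⟩
  · have hsq : cfc σ M * cfc σ M = 1 := by
      rw [← cfc_mul σ σ M, ← cfc_one ℝ M]
      refine cfc_congr fun x _ => ?_
      simp only [σ]
      split_ifs <;> norm_num
    have hsa : star (cfc σ M) = cfc σ M := (cfc_predicate σ M).star_eq
    exact ⟨by rw [hsa, hsq], by rw [hsa, hsq]⟩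
  · have hσM : cfc σ M * M = cfc (fun x => σ x * x) M := by
      rw [cfc_mul σ (fun x : ℝ => x) M, cfc_id' ℝ M]
    have hnorm : cfc (‖·‖) M = cfc (fun x => σ x * x) M := cfc_congr fun x _ => by
      simp only [σ, Real.norm_eq_abs]
      split_ifs with h
      · rw [abs_of_neg h]; ring
      · rw [abs_of_nonneg (not_lt.mp h)]; ring
    rw [traceNorm_eq_re_trace_cfcAbs, CFC.abs_eq_cfc_norm M hM, hnorm, hσM]

theorem traceNorm_mul_mul_sub_le {ρ P : Matrix n n ℂ} (hρ : ρ.PosSemidef) (hPH : Pᴴ = P) :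
    traceNorm (P * ρ * P - ρ) ≤
      √((1 - P) * ρ * (1 - P)).trace.re * (√(P * ρ * P).trace.re + √ρ.trace.re) := by
  set Q := 1 - P with hQ
  have hQH : Qᴴ = Q := by rw [hQ, conjTranspose_sub, conjTranspose_one, hPH]
  have hM : (P * ρ * P - ρ).IsHermitian := by
    simpa only [hPH] using (isHermitian_conjTranspose_mul_mul P hρ.1).sub hρ.1
  obtain ⟨U, hU, hUM⟩ := hM.exists_unitary_traceNorm_eq
  have hsplit : U * (P * ρ * P - ρ) = -((U * Q) * ρ * Pᴴ) - U * ρ * Qᴴ := by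
    simp only [hQ, hPH, conjTranspose_sub, conjTranspose_one, sub_mul, mul_sub, mul_one,
      Matrix.mul_assoc]
    abel
  have hQρ : ((U * Q) * ρ * (U * Q)ᴴ).trace = (Q * ρ * Q).trace := by
    rw [← trace_mul_mul_star_of_mem_unitary hU (Q * ρ * Q), conjTranspose_mul, hQH,
      star_eq_conjTranspose]
    simp only [Matrix.mul_assoc]
  have hUρ : (U * ρ * Uᴴ).trace = ρ.trace := trace_mul_mul_star_of_mem_unitary hU ρ
  have h₁ := hρ.norm_trace_mul_mul_conjTranspose_le P (U * Q)
  have h₂ := hρ.norm_trace_mul_mul_conjTranspose_le Q U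
  rw [hPH, hQρ] at h₁
  rw [hQH, hUρ] at h₂
  have hre : (U * (P * ρ * P - ρ)).trace.re ≤
      ‖((U * Q) * ρ * Pᴴ).trace‖ + ‖(U * ρ * Qᴴ).trace‖ := by
    rw [hsplit, trace_sub, trace_neg, Complex.sub_re, Complex.neg_re]
    linarith [(abs_le.mp (Complex.abs_re_le_norm ((U * Q) * ρ * Pᴴ).trace)).1,
      (abs_le.mp (Complex.abs_re_le_norm (U * ρ * Qᴴ).trace)).1]
  rw [hPH, hQH] at hre
  simp only [RCLike.re_to_complex] at h₁ h₂
  rw [hUM]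
  linarith

end Matrix

/-- Gentle measurement lemma: for any density operator `ρ` and orthogonal
projection `Π`, `‖ΠρΠ − ρ‖₁ ≤ 2√(1 − Tr(Πρ))`. -/
theorem gentle_measurement {N : ℕ} (ρ Pj : Matrix (Fin N) (Fin N) ℂ)
    (hρ : ρ.PosSemidef) (hρtr : ρ.trace = 1)
    (hPj : Pjᴴ = Pj ∧ Pj * Pj = Pj) :
    traceNorm (Pj * ρ * Pj - ρ) ≤ 2 * Real.sqrt (1 - (Pj * ρ).trace.re) := by
  obtain ⟨hPH, hP : IsIdempotentElem Pj⟩ := hPj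
  set t := (Pj * ρ).trace.re
  have hQρQ : ((1 - Pj) * ρ * (1 - Pj)).trace.re = 1 - t := by
    rw [trace_mul_mul_self_of_isIdempotentElem hP.one_sub, sub_mul, one_mul, trace_sub, hρtr,
      Complex.sub_re, Complex.one_re]
  have hPρP : (Pj * ρ * Pj).trace.re = t := by rw [trace_mul_mul_self_of_isIdempotentElem hP]
  have ht : t ≤ 1 := by
    have hnonneg := (hρ.mul_mul_conjTranspose_same (1 - Pj)).trace_nonneg
    rw [conjTranspose_sub, conjTranspose_one, hPH] at hnonneg
    linarith [(Complex.nonneg_iff.mp hnonneg).1]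
  calc traceNorm (Pj * ρ * Pj - ρ) ≤ √(1 - t) * (√t + √1) := by
        simpa only [hQρQ, hPρP, hρtr, Complex.one_re] using traceNorm_mul_mul_sub_le hρ hPH
    _ ≤ 2 * √(1 - t) := by
        rw [Real.sqrt_one]
        nlinarith [Real.sqrt_le_one.mpr ht, Real.sqrt_nonneg (1 - t)]
end
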